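/- arXiv:1107.4915 — 2 statements merged into one kernel-verified Lean document; each statement's English description precedes it below -/
import Mathlib

section
/- A partition Π of a finite set S (|S| ≥ 4) into four nonempty blocks can be uniquely reconstructed from the set P(Π): the blocks of Π are exactly the nonempty pairwise intersections of components of different elements of P(Π). In particular, if Π₁ and Π₂ are two partitions of S into four nonempty blocks with P(Π₁) = P(Π₂), then Π₁ = Π₂. -/
open Finset

variable {α : Type*} [DecidableEq α]

/-- `P(Π)`: the set of unordered 2-part partitions `{A, B}` of `s` such that each of the
two parts is a union of two distinct blocks of the partition `part`. -/
def Pset (s : Finset α) (part : Finpartition s) : Finset (Finset (Finset α)) :=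
  (s.powerset.powerset).filter (fun π => π.card = 2 ∧ π.sup id = s ∧
    (∀ A ∈ π, ∀ B ∈ π, A ≠ B → Disjoint A B) ∧
    (∀ A ∈ π, ∃ p ∈ part.parts, ∃ q ∈ part.parts, p ≠ q ∧ A = p ∪ q))

/-- `N(Π)`: the set of stable unordered 2-part partitions `{A, B}` of `s`
(both parts of cardinality `≥ 2`) such that one of the two parts is a block of `part`. -/
def Nset (s : Finset α) (part : Finpartition s) : Finset (Finset (Finset α)) :=
  (s.powerset.powerset).filter (fun π => π.card = 2 ∧ π.sup id = s ∧
    (∀ A ∈ π, ∀ B ∈ π, A ≠ B → Disjoint A B) ∧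
    (∀ A ∈ π, 2 ≤ A.card) ∧ (∃ A ∈ π, A ∈ part.parts))

/-- `c(σ)` for a 2-partition `σ = {A, B}`: the product `|A|·|B|` of the
cardinalities of its parts. -/
def cval (π : Finset (Finset α)) : ℕ := ∏ A ∈ π, A.card



lemma part_nonempty {s : Finset α} (part : Finpartition s) {p : Finset α}
    (hp : p ∈ part.parts) : p.Nonempty :=
  nonempty_iff_ne_empty.mpr (part.ne_bot hp)

lemma parts_disj {s : Finset α} (part : Finpartition s) {p q : Finset α}
    (hp : p ∈ part.parts) (hq : q ∈ part.parts) (h : p ≠ q) : Disjoint p q :=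
  part.disjoint hp hq h

/-- `π` with two disjoint parts covering `s` is determined by one member. -/
lemma pair_eq_of_mem {s : Finset α} {π : Finset (Finset α)}
    (hc : π.card = 2) (hsup : π.sup id = s)
    (hd : ∀ X ∈ π, ∀ Y ∈ π, X ≠ Y → Disjoint X Y) {B : Finset α} (hB : B ∈ π) :
    π = {B, s \ B} := by
  obtain ⟨a, b, hab, rfl⟩ := card_eq_two.mp hc
  simp only [sup_insert, sup_singleton, id_eq] at hsup
  have ha : a ∈ ({a, b} : Finset (Finset α)) := by simp
  have hb : b ∈ ({a, b} : Finset (Finset α)) := by simp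
  have hdab : Disjoint a b := hd a ha b hb hab
  rcases mem_insert.mp hB with rfl | hBb
  · have : b = s \ B := by
      ext x
      simp only [mem_sdiff]
      constructor
      · intro hx
        exact ⟨hsup ▸ (by simp [hx] : x ∈ B ⊔ b), disjoint_right.mp hdab hx⟩
      · rintro ⟨hxs, hxB⟩
        rw [← hsup] at hxs
        rcases mem_union.mp (by simpa using hxs) with h | h
        · exact absurd h hxB
        · exact h
    rw [← this]
  · obtain rfl : B = b := mem_singleton.mp hBb
    have : a = s \ B := by
      ext x
      simp only [mem_sdiff]
      constructor
      · intro hx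
        exact ⟨hsup ▸ (by simp [hx] : x ∈ a ⊔ B), disjoint_left.mp hdab hx⟩
      · rintro ⟨hxs, hxB⟩
        rw [← hsup] at hxs
        rcases mem_union.mp (by simpa using hxs) with h | h
        · exact h
        · exact absurd h hxB
    rw [pair_comm, ← this]

lemma eq_of_shared {s : Finset α} {π₁ π₂ : Finset (Finset α)}
    (h₁c : π₁.card = 2) (h₁s : π₁.sup id = s)
    (h₁d : ∀ X ∈ π₁, ∀ Y ∈ π₁, X ≠ Y → Disjoint X Y)
    (h₂c : π₂.card = 2) (h₂s : π₂.sup id = s)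
    (h₂d : ∀ X ∈ π₂, ∀ Y ∈ π₂, X ≠ Y → Disjoint X Y)
    {B : Finset α} (hB₁ : B ∈ π₁) (hB₂ : B ∈ π₂) : π₁ = π₂ := by
  rw [pair_eq_of_mem h₁c h₁s h₁d hB₁, pair_eq_of_mem h₂c h₂s h₂d hB₂]

lemma inter_mem {s : Finset α} (part : Finpartition s)
    {p q r t : Finset α} (hp : p ∈ part.parts) (hq : q ∈ part.parts)
    (hr : r ∈ part.parts) (ht : t ∈ part.parts)
    (hpq : p ≠ q) (hrt : r ≠ t) (hne : p ∪ q ≠ r ∪ t)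
    (hA : ((p ∪ q) ∩ (r ∪ t)).Nonempty) : (p ∪ q) ∩ (r ∪ t) ∈ part.parts := by
  have D : ∀ {a b : Finset α}, a ∈ part.parts → b ∈ part.parts → a ≠ b →
      ∀ x, x ∈ a → x ∉ b := fun ha hb hab x hx =>
    disjoint_left.mp (parts_disj part ha hb hab) hx
  by_cases hpr : p = r
  · by_cases hqt : q = t
    · exact absurd (by rw [hpr, hqt]) hne
    · have hpt : p ≠ t := hpr ▸ hrt
      have hqr : q ≠ r := fun h => hpq (hpr.trans h.symm)
      have : (p ∪ q) ∩ (r ∪ t) = p := by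
        subst hpr
        ext x
        have d1 := D hp ht hpt x
        have d2 := D hq hp hqr x
        have d3 := D hq ht hqt x
        simp only [mem_inter, mem_union]
        tauto
      rw [this]; exact hp
  · by_cases hpt : p = t
    · by_cases hqr : q = r
      · exact absurd (by rw [hpt, hqr, union_comm]) hne
      · have hqt : q ≠ t := fun h => hpq (hpt.trans h.symm)
        have : (p ∪ q) ∩ (r ∪ t) = p := by
          subst hpt
          ext x
          have d1 := D hp hr hpr x
          have d2 := D hq hr hqr x
          have d3 := D hq hp hqt x
          simp only [mem_inter, mem_union]
          tauto
        rw [this]; exact hp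
    · by_cases hqr : q = r
      · have hqt : q ≠ t := hqr ▸ hrt
        have : (p ∪ q) ∩ (r ∪ t) = q := by
          subst hqr
          ext x
          have d1 := D hp hq hpr x
          have d2 := D hp ht hpt x
          have d3 := D hq ht hqt x
          simp only [mem_inter, mem_union]
          tauto
        rw [this]; exact hq
      · by_cases hqt : q = t
        · have : (p ∪ q) ∩ (r ∪ t) = q := by
            subst hqt
            ext x
            have d1 := D hp hr hpr x
            have d2 := D hp hq hpt x
            have d3 := D hq hr hqr x
            simp only [mem_inter, mem_union]
            tauto
          rw [this]; exact hq
        · exfalso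
          obtain ⟨x, hx⟩ := hA
          have d1 := D hp hr hpr x
          have d2 := D hp ht hpt x
          have d3 := D hq hr hqr x
          have d4 := D hq ht hqt x
          simp only [mem_inter, mem_union] at hx
          tauto

lemma sub_absurd {p x y : Finset α} (hne : p.Nonempty) (hx : Disjoint p x)
    (hy : Disjoint p y) (hsub : p ⊆ x ∪ y) : False := by
  obtain ⟨z, hz⟩ := hne
  rcases mem_union.mp (hsub hz) with h | h
  · exact disjoint_left.mp hx hz h
  · exact disjoint_left.mp hy hz h

lemma pair_mem_Pset {s : Finset α} (part : Finpartition s)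
    {p q r t : Finset α} (hp : p ∈ part.parts) (hq : q ∈ part.parts)
    (hr : r ∈ part.parts) (ht : t ∈ part.parts)
    (hpq : p ≠ q) (hrt : r ≠ t) (hpr : p ≠ r) (hpt : p ≠ t)
    (hqr : q ≠ r) (hqt : q ≠ t)
    (hsup : (p ∪ q) ∪ (r ∪ t) = s) :
    ({p ∪ q, r ∪ t} : Finset (Finset α)) ∈ Pset s part := by
  have hne : p ∪ q ≠ r ∪ t := fun h =>
    sub_absurd (part_nonempty part hp) (parts_disj part hp hr hpr)
      (parts_disj part hp ht hpt) (h ▸ subset_union_left)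
  rw [Pset, mem_filter]
  refine ⟨mem_powerset.mpr fun X hX => ?_, card_pair hne, ?_, ?_, ?_⟩
  · rcases mem_insert.mp hX with rfl | hX
    · exact mem_powerset.mpr (union_subset (part.le hp) (part.le hq))
    · rw [mem_singleton.mp hX]
      exact mem_powerset.mpr (union_subset (part.le hr) (part.le ht))
  · simp only [sup_insert, sup_singleton, id_eq, sup_eq_union]
    exact hsup
  · intro X hX Y hY hXY
    rcases mem_insert.mp hX with rfl | hX <;> rcases mem_insert.mp hY with rfl | hY
    · exact absurd rfl hXY
    · rw [mem_singleton.mp hY]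
      rw [disjoint_union_left, disjoint_union_right, disjoint_union_right]
      exact ⟨⟨parts_disj part hp hr hpr, parts_disj part hp ht hpt⟩,
        ⟨parts_disj part hq hr hqr, parts_disj part hq ht hqt⟩⟩
    · rw [mem_singleton.mp hX]
      rw [disjoint_union_left, disjoint_union_right, disjoint_union_right]
      exact ⟨⟨(parts_disj part hp hr hpr).symm, (parts_disj part hq hr hqr).symm⟩,
        ⟨(parts_disj part hp ht hpt).symm, (parts_disj part hq ht hqt).symm⟩⟩
    · rw [mem_singleton.mp hX, mem_singleton.mp hY] at hXY
      exact absurd rfl hXY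
  · intro X hX
    rcases mem_insert.mp hX with rfl | hX
    · exact ⟨p, hp, q, hq, hpq, rfl⟩
    · exact ⟨r, hr, t, ht, hrt, mem_singleton.mp hX⟩

lemma reconstruct (s : Finset α) (part : Finpartition s) (h4 : part.parts.card = 4) :
    ∀ A : Finset α,
      A ∈ part.parts ↔ (A ≠ ∅ ∧ ∃ π₁ ∈ Pset s part, ∃ π₂ ∈ Pset s part, π₁ ≠ π₂ ∧
        ∃ B ∈ π₁, ∃ C ∈ π₂, A = B ∩ C) := by
  intro A
  constructor
  · intro hA
    have hAne : A ≠ ∅ := part.ne_bot hA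
    have hcard : (part.parts.erase A).card = 3 := by rw [card_erase_of_mem hA, h4]
    obtain ⟨b, c, d, hbc, hbd, hcd, he⟩ := card_eq_three.mp hcard
    obtain ⟨hbA, hb⟩ := mem_erase.mp (he ▸ (by simp : b ∈ ({b, c, d} : Finset (Finset α))))
    obtain ⟨hcA, hc⟩ := mem_erase.mp (he ▸ (by simp : c ∈ ({b, c, d} : Finset (Finset α))))
    obtain ⟨hdA, hd⟩ := mem_erase.mp (he ▸ (by simp : d ∈ ({b, c, d} : Finset (Finset α))))
    have hins : part.parts = insert A {b, c, d} := by rw [← he, insert_erase hA]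
    have hsup : (A ∪ b) ∪ (c ∪ d) = s := by
      have h := part.sup_parts
      rw [hins] at h
      simp only [sup_insert, sup_singleton, id_eq, sup_eq_union] at h
      rw [← h, union_assoc]
    have hsup2 : (A ∪ c) ∪ (b ∪ d) = s := by
      rw [← hsup]; ext x; simp only [mem_union]; tauto
    have hπ₁ := pair_mem_Pset part hA hb hc hd (Ne.symm hbA) hcd (Ne.symm hcA)
      (Ne.symm hdA) hbc hbd hsup
    have hπ₂ := pair_mem_Pset part hA hc hb hd (Ne.symm hcA) hbd (Ne.symm hbA)
      (Ne.symm hdA) (Ne.symm hbc) hcd hsup2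
    refine ⟨hAne, {A ∪ b, c ∪ d}, hπ₁, {A ∪ c, b ∪ d}, hπ₂, ?_, A ∪ b, by simp,
      A ∪ c, by simp, ?_⟩
    · intro h
      have hmem : A ∪ b ∈ ({A ∪ c, b ∪ d} : Finset (Finset α)) := h ▸ (by simp)
      rcases mem_insert.mp hmem with heq | hmem
      · exact sub_absurd (part_nonempty part hb) (parts_disj part hb hA hbA)
          (parts_disj part hb hc hbc) (heq ▸ subset_union_right)
      · rw [mem_singleton] at hmem
        exact sub_absurd (part_nonempty part hA) (parts_disj part hA hb (Ne.symm hbA))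
          (parts_disj part hA hd (Ne.symm hdA)) (hmem ▸ subset_union_left)
    · ext x
      have hdbc : x ∈ b → x ∉ c := fun h => disjoint_left.mp (parts_disj part hb hc hbc) h
      simp only [mem_inter, mem_union]
      tauto
  · rintro ⟨hAne, π₁, hπ₁, π₂, hπ₂, hne, B, hB, C, hC, rfl⟩
    rw [Pset, mem_filter] at hπ₁ hπ₂
    obtain ⟨-, h1c, h1s, h1d, h1u⟩ := hπ₁
    obtain ⟨-, h2c, h2s, h2d, h2u⟩ := hπ₂
    obtain ⟨p, hp, q, hq, hpq, rfl⟩ := h1u B hB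
    obtain ⟨r, hr, t, ht, hrt, rfl⟩ := h2u C hC
    have hBC : p ∪ q ≠ r ∪ t := fun h =>
      hne (eq_of_shared h1c h1s h1d h2c h2s h2d hB (h ▸ hC))
    exact inter_mem part hp hq hr ht hpq hrt hBC (nonempty_iff_ne_empty.mpr hAne)

/-- A partition of `s` into four nonempty blocks is uniquely reconstructed from `P(Π)`:
its blocks are exactly the nonempty pairwise intersections of components of different
elements of `P(Π)`; in particular `P(Π₁) = P(Π₂)` implies `Π₁ = Π₂`. -/
theorem partition_reconstructed_from_P (s : Finset α) (hs : 4 ≤ s.card)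
    (part₁ part₂ : Finpartition s)
    (h₁ : part₁.parts.card = 4) (h₂ : part₂.parts.card = 4) :
    (∀ A : Finset α,
      A ∈ part₁.parts ↔ (A ≠ ∅ ∧ ∃ π₁ ∈ Pset s part₁, ∃ π₂ ∈ Pset s part₁, π₁ ≠ π₂ ∧
        ∃ B ∈ π₁, ∃ C ∈ π₂, A = B ∩ C)) ∧
    (Pset s part₁ = Pset s part₂ → part₁ = part₂) := by
  refine ⟨reconstruct s part₁ h₁, fun hP => ?_⟩
  have hparts : part₁.parts = part₂.parts := Finset.ext fun A => by
    rw [reconstruct s part₁ h₁ A, reconstruct s part₂ h₂ A, hP]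
  exact Finpartition.ext hparts
end

section
/- For any partition Π of a finite set S with |S| = n ≥ 5 into four nonempty blocks, the quantity 2(|P(Π)| − |N(Π)|) − (1/(n−1))·Σ_{σ∈P(Π)} c(σ) + (1/(n−1))·Σ_{σ∈N(Π)} c(σ) equals 2 − |N(Π)|, where c({A,B}) = |A|·|B|. -/
open Finset

variable {α : Type*} [DecidableEq α]

lemma ne_of_nonempty_subset_disjoint {a X Y : Finset α} (ha : a.Nonempty)
    (hsub : a ⊆ X) (hdisj : Disjoint a Y) : X ≠ Y := fun h =>
  ha.ne_empty (hdisj.eq_bot_of_le (le_of_eq_of_le rfl (h ▸ hsub)))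


lemma finset_pair_eq_pair_iff {a b c d : α} :
    ({a, b} : Finset α) = {c, d} ↔ a = c ∧ b = d ∨ a = d ∧ b = c := by
  rw [← Finset.coe_inj]
  simp only [Finset.coe_insert, Finset.coe_singleton]
  exact Set.pair_eq_pair_iff

lemma pair_mem_Pset_s4 {s : Finset α} {part : Finpartition s} {a b c d : Finset α}
    (ha : a ∈ part.parts) (hb : b ∈ part.parts) (hc : c ∈ part.parts) (hd : d ∈ part.parts)
    (hab : a ≠ b) (hcd : c ≠ d) (hnea : a.Nonempty)
    (hdisj : Disjoint (a ∪ b) (c ∪ d)) (hsup : (a ∪ b) ∪ (c ∪ d) = s) :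
    ({a ∪ b, c ∪ d} : Finset (Finset α)) ∈ Pset s part := by
  have hne : a ∪ b ≠ c ∪ d :=
    ne_of_nonempty_subset_disjoint hnea Finset.subset_union_left
      (hdisj.mono_left Finset.subset_union_left)
  have hsub1 : a ∪ b ⊆ s := hsup ▸ Finset.subset_union_left
  have hsub2 : c ∪ d ⊆ s := hsup ▸ Finset.subset_union_right
  refine Finset.mem_filter.mpr ⟨?_, Finset.card_pair hne, ?_, ?_, ?_⟩
  · simp only [Finset.mem_powerset, Finset.insert_subset_iff, Finset.singleton_subset_iff,
      Finset.mem_powerset]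
    exact ⟨hsub1, hsub2⟩
  · simpa using hsup
  · intro A hA B hB hABne
    simp only [Finset.mem_insert, Finset.mem_singleton] at hA hB
    rcases hA with rfl | rfl <;> rcases hB with rfl | rfl
    · exact absurd rfl hABne
    · exact hdisj
    · exact hdisj.symm
    · exact absurd rfl hABne
  · intro A hA
    simp only [Finset.mem_insert, Finset.mem_singleton] at hA
    rcases hA with rfl | rfl
    · exact ⟨a, ha, b, hb, hab, rfl⟩
    · exact ⟨c, hc, d, hd, hcd, rfl⟩


lemma pair_mem_Nset {s : Finset α} {part : Finpartition s} {p : Finset α}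
    (hp : p ∈ part.parts) (h2 : 2 ≤ p.card) (h2' : 2 ≤ (s \ p).card) :
    ({p, s \ p} : Finset (Finset α)) ∈ Nset s part := by
  have hsub : p ⊆ s := part.le hp
  have hnep : p.Nonempty := Finset.card_pos.mp (by omega)
  have hne : p ≠ s \ p :=
    ne_of_nonempty_subset_disjoint hnep (subset_refl p) Finset.disjoint_sdiff
  refine Finset.mem_filter.mpr ⟨?_, Finset.card_pair hne, ?_, ?_, ?_, p, by simp, hp⟩
  · simp only [Finset.mem_powerset, Finset.insert_subset_iff, Finset.singleton_subset_iff,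
      Finset.mem_powerset]
    exact ⟨hsub, Finset.sdiff_subset⟩
  · simpa using Finset.union_sdiff_of_subset hsub
  · intro A hA B hB hABne
    simp only [Finset.mem_insert, Finset.mem_singleton] at hA hB
    rcases hA with rfl | rfl <;> rcases hB with rfl | rfl
    · exact absurd rfl hABne
    · exact Finset.disjoint_sdiff
    · exact Finset.disjoint_sdiff.symm
    · exact absurd rfl hABne
  · intro A hA
    simp only [Finset.mem_insert, Finset.mem_singleton] at hA
    rcases hA with rfl | rfl
    · exact h2
    · exact h2'

/-- The anticanonical degree formula `(-K_S, β(Π)) = 2 - |N(Π)|`. -/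
theorem anticanonical_degree_formula (s : Finset α) (hs : 5 ≤ s.card)
    (part : Finpartition s) (h4 : part.parts.card = 4) :
    2 * (((Pset s part).card : ℚ) - ((Nset s part).card : ℚ))
      - (1 / ((s.card : ℚ) - 1)) * ∑ σ ∈ Pset s part, (cval σ : ℚ)
      + (1 / ((s.card : ℚ) - 1)) * ∑ σ ∈ Nset s part, (cval σ : ℚ)
      = 2 - ((Nset s part).card : ℚ) := by
  classical
  have h4' : part.parts.card = 3 + 1 := h4
  obtain ⟨p1, t, hp1t, hins, ht3⟩ := Finset.card_eq_succ.mp h4'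
  obtain ⟨p2, p3, p4, h23, h24, h34, ht⟩ := Finset.card_eq_three.mp ht3
  subst ht
  have hparts : part.parts = {p1, p2, p3, p4} := hins.symm
  have h12 : p1 ≠ p2 := fun h => hp1t (by simp [h])
  have h13 : p1 ≠ p3 := fun h => hp1t (by simp [h])
  have h14 : p1 ≠ p4 := fun h => hp1t (by simp [h])
  have hm1 : p1 ∈ part.parts := by rw [hparts]; simp
  have hm2 : p2 ∈ part.parts := by rw [hparts]; simp
  have hm3 : p3 ∈ part.parts := by rw [hparts]; simp
  have hm4 : p4 ∈ part.parts := by rw [hparts]; simp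
  have hne1 : p1.Nonempty := part.nonempty_of_mem_parts hm1
  have hne2 : p2.Nonempty := part.nonempty_of_mem_parts hm2
  have hne3 : p3.Nonempty := part.nonempty_of_mem_parts hm3
  have hne4 : p4.Nonempty := part.nonempty_of_mem_parts hm4
  have hd12 : Disjoint p1 p2 := part.disjoint hm1 hm2 h12
  have hd13 : Disjoint p1 p3 := part.disjoint hm1 hm3 h13
  have hd14 : Disjoint p1 p4 := part.disjoint hm1 hm4 h14
  have hd23 : Disjoint p2 p3 := part.disjoint hm2 hm3 h23
  have hd24 : Disjoint p2 p4 := part.disjoint hm2 hm4 h24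
  have hd34 : Disjoint p3 p4 := part.disjoint hm3 hm4 h34
  have hsup : p1 ∪ (p2 ∪ (p3 ∪ p4)) = s := by
    have := part.sup_parts
    rw [hparts] at this
    simpa [Finset.sup_insert, Finset.sup_singleton] using this
  -- complements of unions of two blocks
  have hc12 : s \ (p1 ∪ p2) = p3 ∪ p4 := by
    rw [← hsup]; rw [show p1 ∪ (p2 ∪ (p3 ∪ p4)) = (p1 ∪ p2) ∪ (p3 ∪ p4) by ac_rfl]
    exact Finset.union_sdiff_cancel_left (by simp [Finset.disjoint_union_left,
      Finset.disjoint_union_right, hd13, hd14, hd23, hd24])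
  have hc13 : s \ (p1 ∪ p3) = p2 ∪ p4 := by
    rw [← hsup]; rw [show p1 ∪ (p2 ∪ (p3 ∪ p4)) = (p1 ∪ p3) ∪ (p2 ∪ p4) by ac_rfl]
    exact Finset.union_sdiff_cancel_left (by simp [Finset.disjoint_union_left,
      Finset.disjoint_union_right, hd12, hd14, hd23, hd34, hd23.symm])
  have hc14 : s \ (p1 ∪ p4) = p2 ∪ p3 := by
    rw [← hsup]; rw [show p1 ∪ (p2 ∪ (p3 ∪ p4)) = (p1 ∪ p4) ∪ (p2 ∪ p3) by ac_rfl]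
    exact Finset.union_sdiff_cancel_left (by simp [Finset.disjoint_union_left,
      Finset.disjoint_union_right, hd12, hd13, hd24.symm, hd34.symm])
  have hs1 : p1 ⊆ s := part.le hm1
  have hs2 : p2 ⊆ s := part.le hm2
  have hs3 : p3 ⊆ s := part.le hm3
  have hs4 : p4 ⊆ s := part.le hm4
  have hc23 : s \ (p2 ∪ p3) = p1 ∪ p4 := by
    rw [← hc14, Finset.sdiff_sdiff_eq_self (Finset.union_subset hs1 hs4)]
  have hc24 : s \ (p2 ∪ p4) = p1 ∪ p3 := by
    rw [← hc13, Finset.sdiff_sdiff_eq_self (Finset.union_subset hs1 hs3)]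
  have hc34 : s \ (p3 ∪ p4) = p1 ∪ p2 := by
    rw [← hc12, Finset.sdiff_sdiff_eq_self (Finset.union_subset hs1 hs2)]
  -- the three pairings
  set Q1 : Finset (Finset α) := {p1 ∪ p2, p3 ∪ p4} with hQ1
  set Q2 : Finset (Finset α) := {p1 ∪ p3, p2 ∪ p4} with hQ2
  set Q3 : Finset (Finset α) := {p1 ∪ p4, p2 ∪ p3} with hQ3
  have hPset : Pset s part = {Q1, Q2, Q3} := by
    ext π
    constructor
    · intro hπ
      obtain ⟨hpow, hcard, hsupπ, hdisjπ, hspec⟩ := Finset.mem_filter.mp hπ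
      obtain ⟨A, B, hAB, rfl⟩ := Finset.card_eq_two.mp hcard
      have hA : A ∈ ({A, B} : Finset (Finset α)) := by simp
      have hB' : B ∈ ({A, B} : Finset (Finset α)) := by simp
      have hABd : Disjoint A B := hdisjπ A hA B hB' hAB
      have hABsup : A ∪ B = s := by simpa using hsupπ
      have hBeq : B = s \ A := by
        rw [← hABsup, Finset.union_sdiff_cancel_left hABd]
      obtain ⟨p, hp, q, hq, hpq, hAeq⟩ := hspec A hA
      rw [hparts] at hp hq
      simp only [Finset.mem_insert, Finset.mem_singleton] at hp hq
      subst hBeq hAeq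
      simp only [hQ1, hQ2, hQ3, Finset.mem_insert, Finset.mem_singleton]
      rcases hp with rfl | rfl | rfl | rfl <;> rcases hq with rfl | rfl | rfl | rfl <;>
        first
          | exact absurd rfl hpq
          | (try simp only [Finset.union_comm q p] at hc12 hc13 hc14 hc23 hc24 hc34 ⊢
             simp [hc12, hc13, hc14, hc23, hc24, hc34, finset_pair_eq_pair_iff])
    · intro hπ
      simp only [Finset.mem_insert, Finset.mem_singleton] at hπ
      rcases hπ with rfl | rfl | rfl
      · exact pair_mem_Pset_s4 hm1 hm2 hm3 hm4 h12 h34 hne1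
          (by simp [Finset.disjoint_union_left, Finset.disjoint_union_right,
            hd13, hd14, hd23, hd24]) (by rw [← hsup]; ac_rfl)
      · exact pair_mem_Pset_s4 hm1 hm3 hm2 hm4 h13 h24 hne1
          (by simp [Finset.disjoint_union_left, Finset.disjoint_union_right,
            hd12, hd14, hd23.symm, hd34]) (by rw [← hsup]; ac_rfl)
      · exact pair_mem_Pset_s4 hm1 hm4 hm2 hm3 h14 h23 hne1
          (by simp [Finset.disjoint_union_left, Finset.disjoint_union_right,
            hd12, hd13, hd24.symm, hd34.symm]) (by rw [← hsup]; ac_rfl)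
  -- distinctness of the three pairings
  have n12 : Q1 ≠ Q2 := by
    rw [hQ1, hQ2]
    intro h
    rcases finset_pair_eq_pair_iff.mp h with ⟨h1, -⟩ | ⟨h1, -⟩
    · exact ne_of_nonempty_subset_disjoint hne2 Finset.subset_union_right
        (Finset.disjoint_union_right.mpr ⟨hd12.symm, hd23⟩) h1
    · exact ne_of_nonempty_subset_disjoint hne1 Finset.subset_union_left
        (Finset.disjoint_union_right.mpr ⟨hd12, hd14⟩) h1
  have n13 : Q1 ≠ Q3 := by
    rw [hQ1, hQ3]
    intro h
    rcases finset_pair_eq_pair_iff.mp h with ⟨h1, -⟩ | ⟨h1, -⟩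
    · exact ne_of_nonempty_subset_disjoint hne2 Finset.subset_union_right
        (Finset.disjoint_union_right.mpr ⟨hd12.symm, hd24⟩) h1
    · exact ne_of_nonempty_subset_disjoint hne1 Finset.subset_union_left
        (Finset.disjoint_union_right.mpr ⟨hd12, hd13⟩) h1
  have n23 : Q2 ≠ Q3 := by
    rw [hQ2, hQ3]
    intro h
    rcases finset_pair_eq_pair_iff.mp h with ⟨h1, -⟩ | ⟨h1, -⟩
    · exact ne_of_nonempty_subset_disjoint hne3 Finset.subset_union_right
        (Finset.disjoint_union_right.mpr ⟨hd13.symm, hd34⟩) h1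
    · exact ne_of_nonempty_subset_disjoint hne1 Finset.subset_union_left
        (Finset.disjoint_union_right.mpr ⟨hd12, hd13⟩) h1
  have hcardP : (Pset s part).card = 3 := by
    rw [hPset, Finset.card_insert_of_notMem (by simp [n12, n13]),
      Finset.card_insert_of_notMem (by simp [n23]), Finset.card_singleton]
  -- values of cval on the pairings
  have ne1 : p1 ∪ p2 ≠ p3 ∪ p4 := ne_of_nonempty_subset_disjoint hne1
    Finset.subset_union_left (Finset.disjoint_union_right.mpr ⟨hd13, hd14⟩)
  have ne2 : p1 ∪ p3 ≠ p2 ∪ p4 := ne_of_nonempty_subset_disjoint hne1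
    Finset.subset_union_left (Finset.disjoint_union_right.mpr ⟨hd12, hd14⟩)
  have ne3 : p1 ∪ p4 ≠ p2 ∪ p3 := ne_of_nonempty_subset_disjoint hne1
    Finset.subset_union_left (Finset.disjoint_union_right.mpr ⟨hd12, hd13⟩)
  have cv1 : cval Q1 = (p1.card + p2.card) * (p3.card + p4.card) := by
    rw [hQ1, cval, Finset.prod_pair ne1, Finset.card_union_of_disjoint hd12,
      Finset.card_union_of_disjoint hd34]
  have cv2 : cval Q2 = (p1.card + p3.card) * (p2.card + p4.card) := by
    rw [hQ2, cval, Finset.prod_pair ne2, Finset.card_union_of_disjoint hd13,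
      Finset.card_union_of_disjoint hd24]
  have cv3 : cval Q3 = (p1.card + p4.card) * (p2.card + p3.card) := by
    rw [hQ3, cval, Finset.prod_pair ne3, Finset.card_union_of_disjoint hd14,
      Finset.card_union_of_disjoint hd23]
  have hsumP : ∑ σ ∈ Pset s part, (cval σ : ℚ) =
      ((p1.card : ℚ) + p2.card) * ((p3.card : ℚ) + p4.card)
      + ((p1.card : ℚ) + p3.card) * ((p2.card : ℚ) + p4.card)
      + ((p1.card : ℚ) + p4.card) * ((p2.card : ℚ) + p3.card) := by
    rw [hPset, Finset.sum_insert (by simp [n12, n13]),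
      Finset.sum_insert (by simp [n23]), Finset.sum_singleton, cv1, cv2, cv3]
    push_cast
    ring
  -- block sizes
  have hsumcard : p1.card + (p2.card + (p3.card + p4.card)) = s.card := by
    have h := part.sum_card_parts
    rw [hparts] at h
    rwa [Finset.sum_insert hp1t, Finset.sum_insert (by simp [h23, h24]),
      Finset.sum_insert (by simp [h34]), Finset.sum_singleton] at h
  have hge1 : 1 ≤ p1.card := Finset.card_pos.mpr hne1
  have hge2 : 1 ≤ p2.card := Finset.card_pos.mpr hne2
  have hge3 : 1 ≤ p3.card := Finset.card_pos.mpr hne3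
  have hge4 : 1 ≤ p4.card := Finset.card_pos.mpr hne4
  -- Nset characterization
  set F : Finset (Finset α) := part.parts.filter (fun p => 2 ≤ p.card) with hF
  have hsdiff2 : ∀ p ∈ part.parts, 2 ≤ (s \ p).card := by
    intro p hp
    rw [hparts] at hp
    simp only [Finset.mem_insert, Finset.mem_singleton] at hp
    rcases hp with rfl | rfl | rfl | rfl <;>
      (rw [Finset.card_sdiff_of_subset (part.le (by rw [hparts]; simp))]; omega)
  have hNset : Nset s part = F.image (fun p => {p, s \ p}) := by
    ext π
    constructor
    · intro hπ
      obtain ⟨hpow, hcard, hsupπ, hdisjπ, hcards, C, hCπ, hCparts⟩ := Finset.mem_filter.mp hπ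
      obtain ⟨A, B, hAB, rfl⟩ := Finset.card_eq_two.mp hcard
      have hA : A ∈ ({A, B} : Finset (Finset α)) := by simp
      have hB' : B ∈ ({A, B} : Finset (Finset α)) := by simp
      have hABd : Disjoint A B := hdisjπ A hA B hB' hAB
      have hABsup : A ∪ B = s := by simpa using hsupπ
      simp only [Finset.mem_insert, Finset.mem_singleton] at hCπ
      rcases hCπ with rfl | rfl
      · refine Finset.mem_image.mpr ⟨C, Finset.mem_filter.mpr ⟨hCparts, hcards C hA⟩, ?_⟩
        rw [← hABsup, Finset.union_sdiff_cancel_left hABd]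
      · refine Finset.mem_image.mpr ⟨C, Finset.mem_filter.mpr ⟨hCparts, hcards C hB'⟩, ?_⟩
        rw [← hABsup, Finset.union_comm, Finset.union_sdiff_cancel_left hABd.symm,
          Finset.pair_comm]
    · intro hπ
      obtain ⟨p, hpF, rfl⟩ := Finset.mem_image.mp hπ
      obtain ⟨hp, hp2⟩ := Finset.mem_filter.mp hpF
      exact pair_mem_Nset hp hp2 (hsdiff2 p hp)
  have hinj : Set.InjOn (fun p => ({p, s \ p} : Finset (Finset α))) F := by
    intro p hp q hq h
    obtain ⟨hpmem, -⟩ := Finset.mem_filter.mp hp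
    obtain ⟨hqmem, -⟩ := Finset.mem_filter.mp hq
    rcases finset_pair_eq_pair_iff.mp h with ⟨h1, -⟩ | ⟨h1, -⟩
    · exact h1
    · exfalso
      have hpq : p ≠ q := by
        intro hpq'
        subst hpq'
        exact ne_of_nonempty_subset_disjoint (part.nonempty_of_mem_parts hpmem)
          (subset_refl p) Finset.disjoint_sdiff h1
      have hr : (((part.parts.erase p).erase q)).Nonempty := by
        rw [← Finset.card_pos]
        have h1c := Finset.card_erase_of_mem hpmem
        have h2c := Finset.card_erase_of_mem
          (Finset.mem_erase.mpr ⟨hpq.symm, hqmem⟩)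
        omega
      obtain ⟨r, hr'⟩ := hr
      obtain ⟨hrq, hrp, hrmem⟩ : r ≠ q ∧ r ≠ p ∧ r ∈ part.parts := by
        simp only [Finset.mem_erase] at hr'
        exact ⟨hr'.1, hr'.2.1, hr'.2.2⟩
      have hrsub : r ⊆ s \ q :=
        Finset.subset_sdiff.mpr ⟨part.le hrmem, part.disjoint hrmem hqmem hrq⟩
      rw [← h1] at hrsub
      exact (part.nonempty_of_mem_parts hrmem).ne_empty
        ((part.disjoint hrmem hpmem hrp).eq_bot_of_le hrsub)
  have hcardN : (Nset s part).card = F.card := by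
    rw [hNset, Finset.card_image_of_injOn hinj]
  have hsumN : ∑ σ ∈ Nset s part, (cval σ : ℚ) =
      ∑ p ∈ F, (p.card : ℚ) * ((s.card : ℚ) - p.card) := by
    rw [hNset, Finset.sum_image hinj]
    refine Finset.sum_congr rfl fun p hp => ?_
    obtain ⟨hpmem, hp2⟩ := Finset.mem_filter.mp hp
    have hnep : p.Nonempty := part.nonempty_of_mem_parts hpmem
    have hne : p ≠ s \ p :=
      ne_of_nonempty_subset_disjoint hnep (subset_refl p) Finset.disjoint_sdiff
    have hle : p.card ≤ s.card := Finset.card_le_card (part.le hpmem)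
    rw [cval, Finset.prod_pair hne, Finset.card_sdiff_of_subset (part.le hpmem)]
    push_cast [hle]
    ring
  -- split the sum over all parts
  have hfull : ∑ p ∈ F, (p.card : ℚ) * ((s.card : ℚ) - p.card)
      + ∑ p ∈ part.parts.filter (fun p => ¬ 2 ≤ p.card),
          (p.card : ℚ) * ((s.card : ℚ) - p.card)
      = ∑ p ∈ part.parts, (p.card : ℚ) * ((s.card : ℚ) - p.card) :=
    Finset.sum_filter_add_sum_filter_not _ _ _
  have hfcount : F.card + (part.parts.filter (fun p => ¬ 2 ≤ p.card)).card = 4 := by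
    rw [hF, Finset.card_filter_add_card_filter_not, h4]
  have hsumnot : ∑ p ∈ part.parts.filter (fun p => ¬ 2 ≤ p.card),
      (p.card : ℚ) * ((s.card : ℚ) - p.card) = (4 - (F.card : ℚ)) * ((s.card : ℚ) - 1) := by
    have hnot : ∀ p ∈ part.parts.filter (fun p => ¬ 2 ≤ p.card),
        (p.card : ℚ) * ((s.card : ℚ) - p.card) = (s.card : ℚ) - 1 := by
      intro p hp
      obtain ⟨hpmem, hp2⟩ := Finset.mem_filter.mp hp
      have hc1 : p.card = 1 := by
        have := Finset.card_pos.mpr (part.nonempty_of_mem_parts hpmem); omega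
      rw [hc1]; push_cast; ring
    rw [Finset.sum_congr rfl hnot, Finset.sum_const, nsmul_eq_mul]
    have hcast : ((part.parts.filter (fun p => ¬ 2 ≤ p.card)).card : ℚ)
        = 4 - (F.card : ℚ) := by
      have h := congrArg (Nat.cast : ℕ → ℚ) hfcount
      push_cast at h
      linarith
    rw [hcast]
  have hallsum : ∑ p ∈ part.parts, (p.card : ℚ) * ((s.card : ℚ) - p.card)
      = (p1.card : ℚ) * ((s.card : ℚ) - p1.card)
      + (p2.card : ℚ) * ((s.card : ℚ) - p2.card)
      + (p3.card : ℚ) * ((s.card : ℚ) - p3.card)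
      + (p4.card : ℚ) * ((s.card : ℚ) - p4.card) := by
    rw [hparts, Finset.sum_insert hp1t, Finset.sum_insert (by simp [h23, h24]),
      Finset.sum_insert (by simp [h34]), Finset.sum_singleton]
    ring
  have hQn : (p1.card : ℚ) + p2.card + p3.card + p4.card = (s.card : ℚ) := by
    have h := congrArg (Nat.cast : ℕ → ℚ) hsumcard
    push_cast at h
    linarith
  have hFsum : ∑ p ∈ F, (p.card : ℚ) * ((s.card : ℚ) - p.card)
      = (p1.card : ℚ) * ((s.card : ℚ) - p1.card)
      + (p2.card : ℚ) * ((s.card : ℚ) - p2.card)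
      + (p3.card : ℚ) * ((s.card : ℚ) - p3.card)
      + (p4.card : ℚ) * ((s.card : ℚ) - p4.card)
      - (4 - (F.card : ℚ)) * ((s.card : ℚ) - 1) := by
    rw [← hallsum, ← hfull, hsumnot]; ring
  have key : ∑ σ ∈ Pset s part, (cval σ : ℚ) - ∑ σ ∈ Nset s part, (cval σ : ℚ)
      = (4 - ((Nset s part).card : ℚ)) * ((s.card : ℚ) - 1) := by
    rw [hsumP, hsumN, hFsum, hcardN]
    linear_combination ((p1.card : ℚ) + p2.card + p3.card + p4.card) * hQn
  have hn5 : (5 : ℚ) ≤ (s.card : ℚ) := by exact_mod_cast hs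
  have hn1 : (s.card : ℚ) - 1 ≠ 0 := ne_of_gt (by linarith)
  have hexp : (1 / ((s.card : ℚ) - 1)) * ∑ σ ∈ Pset s part, (cval σ : ℚ)
      - (1 / ((s.card : ℚ) - 1)) * ∑ σ ∈ Nset s part, (cval σ : ℚ)
      = 4 - ((Nset s part).card : ℚ) := by
    rw [← mul_sub, key]
    field_simp
  rw [hcardP]
  linarith [hexp]
end
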